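/- arXiv:2106.08255 — 2 statements merged into one kernel-verified Lean document; each statement's English description precedes it below -/
import Mathlib

section
/- Let 1 < p ≤ q < ∞ and let a, b ∈ ℝ satisfy b p' < 1 and 1/p' + 1/q = a + b, where p' = p/(p−1). Then there exists a constant C < ∞ such that for every measurable f : (0,∞) → [0,∞], ( ∫_0^∞ ( x^{−a} ∫_0^x y^{−b} f(y) dy )^q dx )^{1/q} ≤ C ( ∫_0^∞ f(y)^p dy )^{1/p}. -/
open MeasureTheory Set
open scoped ENNReal

noncomputable section

lemma lint_Ioc_rpow {c x : ℝ} (hc : 0 < c) (hx : 0 < x) :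
    ∫⁻ y in Ioc (0:ℝ) x, ENNReal.ofReal (y ^ (c-1)) = ENNReal.ofReal (x ^ c / c) := by
  rw [← ofReal_integral_eq_lintegral_ofReal]
  · congr 1
    rw [← intervalIntegral.integral_of_le hx.le, integral_rpow (Or.inl (by linarith))]
    rw [Real.zero_rpow (by linarith : c - 1 + 1 ≠ 0)]
    rw [show c-1+1 = c by ring]; ring_nf
  · exact (intervalIntegral.intervalIntegrable_rpow' (by linarith)).1.mono_set
      (by rw [uIoc_of_le hx.le] : Ioc 0 x ⊆ uIoc 0 x)
  · filter_upwards [self_mem_ae_restrict measurableSet_Ioc] with y hy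
    have : (0:ℝ) < y := hy.1
    positivity

lemma lint_Ioi_rpow {c y : ℝ} (hc : 0 < c) (hy : 0 < y) :
    ∫⁻ x in Ioi y, ENNReal.ofReal (x ^ (-c-1)) = ENNReal.ofReal (y ^ (-c) / c) := by
  rw [← ofReal_integral_eq_lintegral_ofReal]
  · rw [integral_Ioi_rpow_of_lt (by linarith) hy]
    congr 1
    rw [show -c-1+1 = -c by ring]
    field_simp
  · exact integrableOn_Ioi_rpow_of_lt (by linarith) hy
  · filter_upwards [self_mem_ae_restrict measurableSet_Ioi] with x hx
    have : (0:ℝ) < x := lt_trans hy hx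
    positivity


/-- **Lemma (weighted Hardy inequality).** Let `1 < p ≤ q < ∞`, `a, b ∈ ℝ` with `b p' < 1` and
`1/p' + 1/q = a + b`. Then the operator `T_{a,b} f(x) = x^{−a} ∫_0^x y^{−b} f(y) dy` is bounded
from `L^p(0,∞)` to `L^q(0,∞)`. -/
theorem stmt13 (p q a b : ℝ) (hp : 1 < p) (hpq : p ≤ q)
    (hb : b * (p / (p - 1)) < 1) (habq : (1 - 1 / p) + 1 / q = a + b) :
    ∃ C : ℝ, ∀ f : ℝ → ℝ≥0∞, Measurable f →
      (∫⁻ x in Ioi (0 : ℝ),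
          (ENNReal.ofReal (x ^ (-a)) *
            ∫⁻ y in Ioc (0 : ℝ) x, ENNReal.ofReal (y ^ (-b)) * f y) ^ q) ^ (1 / q) ≤
        ENNReal.ofReal C * (∫⁻ y in Ioi (0 : ℝ), f y ^ p) ^ (1 / p) := by
  have hp0 : (0:ℝ) < p := by linarith
  have hq0 : (0:ℝ) < q := by linarith
  have hq1 : (1:ℝ) ≤ q := by linarith
  have hp1 : (0:ℝ) < p - 1 := by linarith
  have hinvp : 1/p < 1 := by rw [div_lt_one hp0]; exact hp
  have hiq0 : (0:ℝ) < 1/q := by positivity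
  have hqp : 1/q ≤ 1/p := one_div_le_one_div_of_le hp0 hpq
  -- the key constants
  set α : ℝ := 1 - 1/p - b with hα_def
  set s : ℝ := 1 + 1/q - 1/p with hs_def
  have hbp : b * p < p - 1 := by
    have h := hb
    rw [mul_div_assoc', div_lt_one hp1] at h
    linarith [h]
  have hα : 0 < α := by
    have : b < 1 - 1/p := by
      rw [show (1:ℝ) - 1/p = (p-1)/p by field_simp]
      rw [lt_div_iff₀ hp0]; linarith
    simp only [hα_def]; linarith
  have hs : 0 < s := by simp only [hs_def]; linarith
  set c : ℝ := α / s with hc_def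
  have hc : 0 < c := div_pos hα hs
  have hcs : c * s = α := div_mul_cancel₀ _ hs.ne'
  have ha : a = α + 1/q := by simp only [hα_def]; linarith
  -- the three Hölder exponents
  set θ₁ : ℝ := 1/q with hθ₁_def
  set θ₂ : ℝ := 1 - 1/p with hθ₂_def
  set θ₃ : ℝ := 1/p - 1/q with hθ₃_def
  have hθ₁0 : 0 ≤ θ₁ := hiq0.le
  have hθ₂0 : 0 ≤ θ₂ := by simp only [hθ₂_def]; linarith
  have hθ₃0 : 0 ≤ θ₃ := by simp only [hθ₃_def]; linarith
  have hθsum : θ₁ + θ₂ + θ₃ = 1 := by simp only [hθ₁_def, hθ₂_def, hθ₃_def]; ring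
  have hθ12 : θ₁ + θ₂ = s := by simp only [hθ₁_def, hθ₂_def, hs_def]; ring
  refine ⟨(1/c) ^ s, fun f hf => ?_⟩
  set A : ℝ≥0∞ := ENNReal.ofReal (1/c) with hA_def
  have hA_ne_top : A ≠ ⊤ := ENNReal.ofReal_ne_top
  set B : ℝ≥0∞ := ∫⁻ y in Ioi (0:ℝ), f y ^ p with hB_def
  have hCA : ENNReal.ofReal ((1/c)^s) = A ^ s := by
    rw [hA_def, ENNReal.ofReal_rpow_of_pos (by positivity)]
  by_cases hBtop : B = ⊤
  · rw [hBtop]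
    rw [ENNReal.top_rpow_of_pos (by positivity)]
    rw [ENNReal.mul_top (by
      simp only [ne_eq, ENNReal.ofReal_eq_zero, not_le]
      positivity)]
    exact le_top
  -- main case
  have mrp : ∀ e : ℝ, Measurable fun t : ℝ => ENNReal.ofReal (t ^ e) := fun e =>
    ENNReal.measurable_ofReal.comp (measurable_id.pow measurable_const)
  set g : ℝ → ℝ≥0∞ := fun y => ENNReal.ofReal (y ^ c) * f y ^ p with hg_def
  have hg : Measurable g := (mrp c).mul (hf.pow_const p)
  set W : ℝ × ℝ → ℝ≥0∞ := fun z =>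
    ENNReal.ofReal (z.1 ^ (-c - 1)) * ({w : ℝ × ℝ | w.2 ≤ w.1}.indicator (fun w => g w.2) z)
    with hW_def
  have hWmeas : Measurable W :=
    ((mrp (-c-1)).comp measurable_fst).mul
      ((hg.comp measurable_snd).indicator (measurableSet_le measurable_snd measurable_fst))
  have hpθ : p * θ₁ + p * θ₃ = 1 := by
    rw [hθ₁_def, hθ₃_def]; field_simp; ring
  have hθ₁q : θ₁ * q = 1 := by rw [hθ₁_def]; field_simp
  -- STEP 1 : pointwise bound
  have key1 : ∀ x ∈ Ioi (0:ℝ),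
      (ENNReal.ofReal (x ^ (-a)) * ∫⁻ y in Ioc (0:ℝ) x, ENNReal.ofReal (y ^ (-b)) * f y) ^ q
        ≤ (A ^ (θ₂ * q) * B ^ (θ₃ * q)) * ∫⁻ y in Ioi (0:ℝ), W (x, y) := by
    intro x hx
    rw [mem_Ioi] at hx
    set Ig : ℝ≥0∞ := ∫⁻ y in Ioc (0:ℝ) x, g y with hIg_def
    have hWx : ∫⁻ y in Ioi (0:ℝ), W (x, y) = ENNReal.ofReal (x ^ (-c - 1)) * Ig := by
      have h1 : (fun y => W (x, y)) =
          fun y => ENNReal.ofReal (x ^ (-c - 1)) * (Iic x).indicator g y := by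
        funext y
        simp only [hW_def, Set.indicator_apply, mem_setOf_eq, mem_Iic]
      rw [h1, lintegral_const_mul' _ _ ENNReal.ofReal_ne_top,
        lintegral_indicator measurableSet_Iic, Measure.restrict_restrict measurableSet_Iic,
        show Iic x ∩ Ioi (0:ℝ) = Ioc 0 x from Set.ext fun y => and_comm]
    -- rewrite the inner integral via the three-factor splitting
    have inner_eq : (∫⁻ y in Ioc (0:ℝ) x, ENNReal.ofReal (y ^ (-b)) * f y)
        = ENNReal.ofReal (x ^ (a - θ₁)) *
          ∫⁻ y in Ioc (0:ℝ) x,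
            (ENNReal.ofReal (x ^ (-c) * y ^ c) * f y ^ p) ^ θ₁ *
            (ENNReal.ofReal (x ^ (-c) * y ^ (c - 1))) ^ θ₂ * (f y ^ p) ^ θ₃ := by
      rw [← lintegral_const_mul' _ _ ENNReal.ofReal_ne_top]
      refine setLIntegral_congr_fun measurableSet_Ioc (fun y hy => ?_)
      have hy0 : (0:ℝ) < y := hy.1
      have e1 : ENNReal.ofReal (y ^ (-b)) =
          ENNReal.ofReal (x ^ (a - θ₁)) * ENNReal.ofReal ((x ^ (-c) * y ^ c) ^ θ₁) *
            ENNReal.ofReal ((x ^ (-c) * y ^ (c - 1)) ^ θ₂) := by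
        rw [← ENNReal.ofReal_mul (by positivity), ← ENNReal.ofReal_mul (by positivity)]
        congr 1
        symm
        have hexp : c * θ₁ + c * θ₂ = α := by rw [← hcs, ← hθ12]; ring
        have hab : α = θ₂ - b := by rw [hα_def]
        calc x ^ (a - θ₁) * (x ^ (-c) * y ^ c) ^ θ₁ * (x ^ (-c) * y ^ (c - 1)) ^ θ₂
            = x ^ (a - θ₁) * (x ^ (-c * θ₁) * y ^ (c * θ₁)) *
              (x ^ (-c * θ₂) * y ^ ((c - 1) * θ₂)) := by
              rw [Real.mul_rpow (by positivity) (by positivity),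
                Real.mul_rpow (by positivity) (by positivity),
                ← Real.rpow_mul hx.le, ← Real.rpow_mul hy0.le,
                ← Real.rpow_mul hx.le, ← Real.rpow_mul hy0.le]
          _ = (x ^ (a - θ₁) * x ^ (-c * θ₁) * x ^ (-c * θ₂)) *
              (y ^ (c * θ₁) * y ^ ((c - 1) * θ₂)) := by ring
          _ = x ^ ((a - θ₁) + (-c * θ₁) + (-c * θ₂)) * y ^ (c * θ₁ + (c - 1) * θ₂) := by
              rw [← Real.rpow_add hx, ← Real.rpow_add hx, ← Real.rpow_add hy0]
          _ = y ^ (-b) := by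
              rw [show (a - θ₁) + (-c * θ₁) + (-c * θ₂) = 0 by linarith,
                Real.rpow_zero, one_mul]
              congr 1
              linarith
      have e2 : f y = f y ^ (p * θ₁) * f y ^ (p * θ₃) := by
        rw [← ENNReal.rpow_add_of_nonneg _ _ (mul_nonneg hp0.le hθ₁0) (mul_nonneg hp0.le hθ₃0),
          hpθ, ENNReal.rpow_one]
      rw [ENNReal.mul_rpow_of_nonneg _ _ hθ₁0,
        ENNReal.ofReal_rpow_of_pos (by positivity),
        ENNReal.ofReal_rpow_of_pos (by positivity),
        ← ENNReal.rpow_mul, ← ENNReal.rpow_mul, e1]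
      conv_lhs => rw [e2]
      ring
    -- Hölder's inequality for three factors
    have m1 : Measurable fun y : ℝ => ENNReal.ofReal (x ^ (-c) * y ^ c) * f y ^ p :=
      (ENNReal.measurable_ofReal.comp
        ((measurable_id.pow measurable_const).const_mul _)).mul (hf.pow_const p)
    have m2 : Measurable fun y : ℝ => ENNReal.ofReal (x ^ (-c) * y ^ (c - 1)) :=
      ENNReal.measurable_ofReal.comp
        ((measurable_id.pow measurable_const).const_mul _)
    have m3 : Measurable fun y : ℝ => f y ^ p := hf.pow_const p
    have holder : (∫⁻ y in Ioc (0:ℝ) x,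
          (ENNReal.ofReal (x ^ (-c) * y ^ c) * f y ^ p) ^ θ₁ *
            (ENNReal.ofReal (x ^ (-c) * y ^ (c - 1))) ^ θ₂ * (f y ^ p) ^ θ₃)
        ≤ (∫⁻ y in Ioc (0:ℝ) x, ENNReal.ofReal (x ^ (-c) * y ^ c) * f y ^ p) ^ θ₁ *
          (∫⁻ y in Ioc (0:ℝ) x, ENNReal.ofReal (x ^ (-c) * y ^ (c - 1))) ^ θ₂ *
          (∫⁻ y in Ioc (0:ℝ) x, f y ^ p) ^ θ₃ := by
      have H := ENNReal.lintegral_prod_norm_pow_le (μ := volume.restrict (Ioc (0:ℝ) x))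
        (Finset.univ : Finset (Fin 3))
        (f := ![fun y => ENNReal.ofReal (x ^ (-c) * y ^ c) * f y ^ p,
                fun y => ENNReal.ofReal (x ^ (-c) * y ^ (c - 1)),
                fun y => f y ^ p])
        (fun i _ => by
          fin_cases i
          · exact m1.aemeasurable
          · exact m2.aemeasurable
          · exact m3.aemeasurable)
        (p := ![θ₁, θ₂, θ₃])
        (by rw [Fin.sum_univ_three]; simpa using hθsum)
        (fun i _ => by
          fin_cases i
          · exact hθ₁0
          · exact hθ₂0
          · exact hθ₃0)
      simpa [Fin.prod_univ_three] using H
    -- compute the three integrals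
    have hxc0 : (0:ℝ) ≤ x ^ (-c) := by positivity
    have hxcne : (x:ℝ) ^ c ≠ 0 := (Real.rpow_pos_of_pos hx c).ne'
    have i2 : (∫⁻ y in Ioc (0:ℝ) x, ENNReal.ofReal (x ^ (-c) * y ^ (c - 1))) = A := by
      simp_rw [ENNReal.ofReal_mul hxc0]
      rw [lintegral_const_mul' _ _ ENNReal.ofReal_ne_top, lint_Ioc_rpow hc hx,
        ← ENNReal.ofReal_mul hxc0, hA_def]
      congr 1
      rw [Real.rpow_neg hx.le]
      field_simp
    have i1 : (∫⁻ y in Ioc (0:ℝ) x, ENNReal.ofReal (x ^ (-c) * y ^ c) * f y ^ p)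
        = ENNReal.ofReal (x ^ (-c)) * Ig := by
      simp_rw [ENNReal.ofReal_mul hxc0, mul_assoc]
      rw [lintegral_const_mul' _ _ ENNReal.ofReal_ne_top, hIg_def]
    have i3 : (∫⁻ y in Ioc (0:ℝ) x, f y ^ p) ≤ B :=
      lintegral_mono_set fun y hy => hy.1
    -- assemble the pointwise bound before taking q-th powers
    have step : ENNReal.ofReal (x ^ (-a)) *
          (∫⁻ y in Ioc (0:ℝ) x, ENNReal.ofReal (y ^ (-b)) * f y)
        ≤ ENNReal.ofReal (x ^ (-θ₁)) *
          ((ENNReal.ofReal (x ^ (-c)) * Ig) ^ θ₁ * (A ^ θ₂ * B ^ θ₃)) := by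
      rw [inner_eq, ← mul_assoc, ← ENNReal.ofReal_mul (by positivity), ← Real.rpow_add hx,
        show -a + (a - θ₁) = -θ₁ by ring]
      refine mul_le_mul_right ?_ _
      refine le_trans holder ?_
      rw [i1, i2, mul_assoc]
      exact mul_le_mul_right (mul_le_mul_right (ENNReal.rpow_le_rpow i3 hθ₃0) _) _
    have stepq := ENNReal.rpow_le_rpow step hq0.le
    refine le_trans stepq (le_of_eq ?_)
    rw [hWx]
    have hx1 : ENNReal.ofReal (x ^ (-1:ℝ)) * ENNReal.ofReal (x ^ (-c))
        = ENNReal.ofReal (x ^ (-c - 1)) := by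
      rw [← ENNReal.ofReal_mul (by positivity), ← Real.rpow_add hx,
        show (-1:ℝ) + -c = -c - 1 by ring]
    rw [ENNReal.mul_rpow_of_nonneg _ _ hq0.le, ENNReal.mul_rpow_of_nonneg _ _ hq0.le,
      ENNReal.mul_rpow_of_nonneg _ _ hq0.le,
      ← ENNReal.rpow_mul, hθ₁q, ENNReal.rpow_one,
      ← ENNReal.rpow_mul, ← ENNReal.rpow_mul,
      ENNReal.ofReal_rpow_of_pos (by positivity), ← Real.rpow_mul hx.le,
      show -θ₁ * q = (-1:ℝ) by rw [hθ₁_def]; field_simp]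
    rw [← hx1]
    ring
  -- STEP 2 : integrate and swap
  have inner2 : ∀ y ∈ Ioi (0:ℝ), (∫⁻ x in Ioi (0:ℝ), W (x, y)) = A * f y ^ p := by
    intro y hy
    rw [mem_Ioi] at hy
    have h1 : (fun x => W (x, y)) =
        (Ici y).indicator (fun x => ENNReal.ofReal (x ^ (-c - 1)) * g y) := by
      funext x
      simp only [hW_def, Set.indicator_apply, mem_setOf_eq, mem_Ici]
      by_cases h : y ≤ x <;> simp [h]
    rw [h1, lintegral_indicator measurableSet_Ici, Measure.restrict_restrict measurableSet_Ici,
      show Ici y ∩ Ioi (0:ℝ) = Ici y from inter_eq_left.mpr fun t ht => lt_of_lt_of_le hy ht,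
      setLIntegral_congr (Ioi_ae_eq_Ici (a := y)).symm,
      lintegral_mul_const _ (mrp (-c-1)), lint_Ioi_rpow hc hy, hg_def]
    show ENNReal.ofReal (y ^ (-c) / c) * (ENNReal.ofReal (y ^ c) * f y ^ p) = A * f y ^ p
    rw [← mul_assoc, ← ENNReal.ofReal_mul (by positivity), hA_def]
    congr 2
    have hyc := (Real.rpow_pos_of_pos hy c).ne'
    rw [Real.rpow_neg hy.le]
    field_simp
  have co : A ^ (θ₂ * q) * B ^ (θ₃ * q) ≠ ⊤ :=
    ENNReal.mul_ne_top (ENNReal.rpow_ne_top_of_nonneg (mul_nonneg hθ₂0 hq0.le) hA_ne_top)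
      (ENNReal.rpow_ne_top_of_nonneg (mul_nonneg hθ₃0 hq0.le) hBtop)
  have main : (∫⁻ x in Ioi (0:ℝ),
        (ENNReal.ofReal (x ^ (-a)) * ∫⁻ y in Ioc (0:ℝ) x, ENNReal.ofReal (y ^ (-b)) * f y) ^ q)
      ≤ (A ^ (θ₂ * q) * B ^ (θ₃ * q)) * (A * B) := by
    calc (∫⁻ x in Ioi (0:ℝ),
        (ENNReal.ofReal (x ^ (-a)) * ∫⁻ y in Ioc (0:ℝ) x, ENNReal.ofReal (y ^ (-b)) * f y) ^ q)
        ≤ ∫⁻ x in Ioi (0:ℝ), (A ^ (θ₂ * q) * B ^ (θ₃ * q)) * ∫⁻ y in Ioi (0:ℝ), W (x, y) :=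
          setLIntegral_mono' measurableSet_Ioi key1
      _ = (A ^ (θ₂ * q) * B ^ (θ₃ * q)) * ∫⁻ x in Ioi (0:ℝ), ∫⁻ y in Ioi (0:ℝ), W (x, y) :=
          lintegral_const_mul' _ _ co
      _ = (A ^ (θ₂ * q) * B ^ (θ₃ * q)) * ∫⁻ y in Ioi (0:ℝ), ∫⁻ x in Ioi (0:ℝ), W (x, y) := by
          rw [lintegral_lintegral_swap hWmeas.aemeasurable]
      _ = (A ^ (θ₂ * q) * B ^ (θ₃ * q)) * ∫⁻ y in Ioi (0:ℝ), A * f y ^ p := by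
          rw [setLIntegral_congr_fun measurableSet_Ioi inner2]
      _ = (A ^ (θ₂ * q) * B ^ (θ₃ * q)) * (A * B) := by
          rw [lintegral_const_mul' _ _ hA_ne_top]
  -- STEP 3 : conclude
  calc (∫⁻ x in Ioi (0:ℝ),
        (ENNReal.ofReal (x ^ (-a)) * ∫⁻ y in Ioc (0:ℝ) x, ENNReal.ofReal (y ^ (-b)) * f y) ^ q)
          ^ θ₁
      ≤ ((A ^ (θ₂ * q) * B ^ (θ₃ * q)) * (A * B)) ^ θ₁ := ENNReal.rpow_le_rpow main hθ₁0
    _ = A ^ s * B ^ (1/p) := by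
        rw [show (A ^ (θ₂ * q) * B ^ (θ₃ * q)) * (A * B)
            = (A ^ (θ₂ * q) * A ^ (1:ℝ)) * (B ^ (θ₃ * q) * B ^ (1:ℝ)) by
          rw [ENNReal.rpow_one, ENNReal.rpow_one]; ring]
        rw [← ENNReal.rpow_add_of_nonneg _ _ (mul_nonneg hθ₂0 hq0.le) zero_le_one,
          ← ENNReal.rpow_add_of_nonneg _ _ (mul_nonneg hθ₃0 hq0.le) zero_le_one,
          ENNReal.mul_rpow_of_nonneg _ _ hθ₁0, ← ENNReal.rpow_mul, ← ENNReal.rpow_mul,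
          show (θ₂ * q + 1) * θ₁ = s by linear_combination θ₂ * hθ₁q + hθ12,
          show (θ₃ * q + 1) * θ₁ = 1/p by
            have hθ13 : θ₃ + θ₁ = 1/p := by rw [hθ₃_def, hθ₁_def]; ring
            linear_combination θ₃ * hθ₁q + hθ13]
    _ = ENNReal.ofReal ((1/c) ^ s) * B ^ (1/p) := by rw [hCA]
end
end

section
/- Let 1 < q < p < ∞, a ≥ 0, and 0 < b < 1 satisfy 1/p' + 1/q = a + b, where p' = p/(p−1). For 0 < ε < p/q − 1, define f_ε(x) := x^{−1/p} |log x|^{−(1+ε)/p} for x ∈ (0, 1/2] and f_ε(x) := 0 for x ∈ (1/2, 1]. Then f_ε ∈ L^p((0,1]) (that is, ∫_0^1 f_ε(x)^p dx < ∞), but the function x ↦ x^{−a} ∫_0^x (x−y)^{−b} f_ε(y) dy is not in L^q((0,1]); in particular, S_{a,b} is not bounded from L^p((0,1]) to L^q((0,1]). -/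
open MeasureTheory Set
open scoped ENNReal

noncomputable section

private lemma aux_cov (s : ℝ) :
    IntegrableOn (fun x : ℝ => x⁻¹ * (-Real.log x) ^ s) (Ioo 0 (1/2)) ↔
    IntegrableOn (fun t : ℝ => t ^ s) (Ioi (Real.log 2)) := by
  have himg : (fun t : ℝ => Real.exp (-t)) '' Ioi (Real.log 2) = Ioo (0:ℝ) (1/2) := by
    ext u
    constructor
    · rintro ⟨t, ht, rfl⟩
      refine ⟨Real.exp_pos _, ?_⟩
      rw [show (1:ℝ)/2 = Real.exp (Real.log (1/2)) from (Real.exp_log (by norm_num)).symm]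
      apply Real.exp_lt_exp.2
      rw [one_div, Real.log_inv]
      linarith [mem_Ioi.1 ht]
    · intro hu
      refine ⟨-Real.log u, ?_, by simp [Real.exp_log hu.1]⟩
      have h1 : Real.log u < Real.log (1/2) := Real.log_lt_log hu.1 hu.2
      rw [one_div, Real.log_inv] at h1
      simp only [mem_Ioi]
      linarith
  have hderiv : ∀ t ∈ Ioi (Real.log 2),
      HasDerivWithinAt (fun t : ℝ => Real.exp (-t)) (-Real.exp (-t)) (Ioi (Real.log 2)) t := by
    intro t _
    have h : HasDerivAt (fun t : ℝ => Real.exp (-t)) (Real.exp (-t) * (-1)) t :=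
      (Real.hasDerivAt_exp (-t)).comp t (hasDerivAt_neg t)
    simpa [mul_comm] using h.hasDerivWithinAt
  have hinj : InjOn (fun t : ℝ => Real.exp (-t)) (Ioi (Real.log 2)) := fun a _ b _ h => by
    simpa using neg_injective (Real.exp_injective h)
  rw [← himg, integrableOn_image_iff_integrableOn_abs_deriv_smul measurableSet_Ioi hderiv hinj]
  have hfun : (fun t : ℝ => |(-Real.exp (-t))| •
      ((Real.exp (-t))⁻¹ * (-Real.log (Real.exp (-t))) ^ s)) = fun t : ℝ => t ^ s := by
    funext t
    rw [abs_neg, abs_of_pos (Real.exp_pos _), Real.log_exp, neg_neg, smul_eq_mul,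
      ← mul_assoc, mul_inv_cancel₀ (Real.exp_ne_zero _), one_mul]
  rw [hfun]

private lemma aux_fin {s : ℝ} (hs : s < -1) :
    IntegrableOn (fun x : ℝ => x⁻¹ * (-Real.log x) ^ s) (Ioo 0 (1/2)) :=
  (aux_cov s).2 ((integrableOn_Ioi_rpow_iff (Real.log_pos one_lt_two)).2 hs)

private lemma aux_div {s : ℝ} (hs : -1 ≤ s) :
    ∫⁻ x in Ioo (0:ℝ) (1/2), ENNReal.ofReal (x⁻¹ * (-Real.log x) ^ s) = ⊤ := by
  by_contra h
  have hmeas : Measurable fun x : ℝ => x⁻¹ * (-Real.log x) ^ s :=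
    measurable_inv.mul
      (((by fun_prop : Measurable fun t : ℝ => t ^ s)).comp Real.measurable_log.neg)
  have hnn : 0 ≤ᵐ[volume.restrict (Ioo (0:ℝ) (1/2))] fun x : ℝ => x⁻¹ * (-Real.log x) ^ s := by
    refine (ae_restrict_iff' measurableSet_Ioo).2 (ae_of_all _ fun x hx => ?_)
    have hlog : Real.log x ≤ 0 := Real.log_nonpos hx.1.le (by linarith [hx.2])
    exact mul_nonneg (inv_nonneg.2 hx.1.le) (Real.rpow_nonneg (by linarith) _)
  have hint : IntegrableOn (fun x : ℝ => x⁻¹ * (-Real.log x) ^ s) (Ioo 0 (1/2)) :=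
    ⟨hmeas.aestronglyMeasurable, (hasFiniteIntegral_iff_ofReal hnn).2 (Ne.lt_top h)⟩
  rw [aux_cov, integrableOn_Ioi_rpow_iff (Real.log_pos one_lt_two)] at hint
  linarith

/-- **Remark (sharpness of `p ≤ q` in the endpoint Stein–Weiss bound).** Let `1 < q < p < ∞`,
`a ≥ 0`, `0 < b < 1` with `1/p' + 1/q = a + b`, and `0 < ε < p/q − 1`. Then
`f_ε(x) = x^{−1/p} |log x|^{−(1+ε)/p} 1_{(0,1/2]}(x)` belongs to `L^p((0,1])`, but
`S_{a,b}(f_ε)(x) = x^{−a} ∫_0^x (x−y)^{−b} f_ε(y) dy` is not in `L^q((0,1])`. -/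
theorem stmt15 (p q a b : ℝ) (hq1 : 1 < q) (hqp : q < p)
    (ha : 0 ≤ a) (hb0 : 0 < b) (hb1 : b < 1)
    (hcond : (1 - 1 / p) + 1 / q = a + b)
    (ε : ℝ) (hε0 : 0 < ε) (hε1 : ε < p / q - 1) :
    let fε : ℝ → ℝ := fun x =>
      if x ≤ 1 / 2 then x ^ (-(1 / p)) * |Real.log x| ^ (-((1 + ε) / p)) else 0
    (∫⁻ x in Ioc (0 : ℝ) 1, ENNReal.ofReal (fε x ^ p)) < ⊤ ∧
    (∫⁻ x in Ioc (0 : ℝ) 1,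
        (ENNReal.ofReal (x ^ (-a)) *
          ∫⁻ y in Ioc (0 : ℝ) x, ENNReal.ofReal ((x - y) ^ (-b) * fε y)) ^ q) = ⊤ := by
  intro fε
  have hp1 : 1 < p := hq1.trans hqp
  have hp0 : (0:ℝ) < p := by linarith
  have hq0 : (0:ℝ) < q := by linarith
  constructor
  · -- finiteness of the L^p norm of fε
    have h1 : IntegrableOn (fun x => fε x ^ p) (Ioc 0 (1/2)) volume := by
      refine IntegrableOn.congr_set_ae ?_ Ioo_ae_eq_Ioc.symm
      have heq : EqOn (fun x => fε x ^ p)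
          (fun x : ℝ => x⁻¹ * (-Real.log x) ^ (-(1+ε))) (Ioo 0 (1/2)) := by
        intro x hx
        have hx0 : (0:ℝ) < x := hx.1
        have hlog : Real.log x < 0 := Real.log_neg hx0 (by linarith [hx.2])
        simp only [fε]
        rw [if_pos hx.2.le, abs_of_neg hlog,
          Real.mul_rpow (Real.rpow_nonneg hx0.le _) (Real.rpow_nonneg (by linarith) _),
          ← Real.rpow_mul hx0.le, ← Real.rpow_mul (by linarith : (0:ℝ) ≤ -Real.log x),
          show -(1/p) * p = -1 by field_simp,
          show -((1+ε)/p) * p = -(1+ε) by field_simp,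
          Real.rpow_neg_one]
      rw [integrableOn_congr_fun heq measurableSet_Ioo]
      exact aux_fin (by linarith)
    have h2 : IntegrableOn (fun x => fε x ^ p) (Ioc (1/2) 1) volume := by
      have heq : EqOn (fun x => fε x ^ p) (fun _ : ℝ => (0:ℝ)) (Ioc (1/2) 1) := by
        intro x hx
        simp only [fε]
        rw [if_neg (not_le.2 hx.1), Real.zero_rpow (ne_of_gt hp0)]
      rw [integrableOn_congr_fun heq measurableSet_Ioc]
      exact integrableOn_zero
    have h3 : IntegrableOn (fun x => fε x ^ p) (Ioc 0 1) volume := by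
      have := h1.union h2
      rwa [Ioc_union_Ioc_eq_Ioc (by norm_num) (by norm_num)] at this
    exact h3.setLIntegral_lt_top
  · -- divergence of the L^q norm of S_{a,b} fε
    set K : ℝ := 2 ^ (-((1+ε)/p)) / 2 with hKdef
    have hK : 0 < K := by
      have := Real.rpow_pos_of_pos (by norm_num : (0:ℝ) < 2) (-((1+ε)/p))
      positivity
    have hsle : (1+ε) * q / p ≤ 1 := by
      have h1 : ε + 1 < p / q := by linarith
      have h2 : (ε + 1) * q < p := (lt_div_iff₀ hq0).1 h1
      rw [div_le_one hp0]
      nlinarith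
    have hlow : ∀ x ∈ Ioo (0:ℝ) (1/2),
        ENNReal.ofReal (K ^ q) * ENNReal.ofReal (x⁻¹ * (-Real.log x) ^ (-((1+ε) * q / p))) ≤
        (ENNReal.ofReal (x ^ (-a)) *
          ∫⁻ y in Ioc (0 : ℝ) x, ENNReal.ofReal ((x - y) ^ (-b) * fε y)) ^ q := by
      intro x hx
      have hx0 : (0:ℝ) < x := hx.1
      have hx2 : x < 1/2 := hx.2
      have hL : 0 < -Real.log x := neg_pos.2 (Real.log_neg hx0 (by linarith))
      set L : ℝ := -Real.log x with hLdef
      set M : ℝ := x ^ (-b) * (x ^ (-(1/p)) * (2*L) ^ (-((1+ε)/p))) with hMdef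
      have hM : 0 ≤ M := by positivity
      -- pointwise lower bound on the inner integrand
      have stepA : ∀ y ∈ Ioo (x/2) x, M ≤ (x - y) ^ (-b) * fε y := by
        intro y hy
        have hy1 : x/2 < y := hy.1
        have hy2 : y < x := hy.2
        have hy0 : 0 < y := lt_trans (by linarith) hy1
        have hylog : Real.log y < 0 := Real.log_neg hy0 (by linarith)
        have hfy : fε y = y ^ (-(1/p)) * (-Real.log y) ^ (-((1+ε)/p)) := by
          simp only [fε]
          rw [if_pos (by linarith : y ≤ 1/2), abs_of_neg hylog]
        rw [hfy]
        have e1 : x ^ (-b) ≤ (x - y) ^ (-b) :=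
          Real.rpow_le_rpow_of_nonpos (by linarith) (by linarith) (by linarith)
        have e2 : x ^ (-(1/p)) ≤ y ^ (-(1/p)) :=
          Real.rpow_le_rpow_of_nonpos hy0 hy2.le (by rw [neg_nonpos]; positivity)
        have hlogy : -Real.log y ≤ 2 * L := by
          have h1 : Real.log (x/2) < Real.log y := Real.log_lt_log (by positivity) hy1
          have h2 : Real.log (x/2) = Real.log x - Real.log 2 :=
            Real.log_div (ne_of_gt hx0) two_ne_zero
          have h3 : Real.log x < -Real.log 2 := by
            have h4 := Real.log_lt_log hx0 hx2
            rwa [one_div, Real.log_inv] at h4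
          simp only [hLdef]
          linarith
        have e3 : (2*L) ^ (-((1+ε)/p)) ≤ (-Real.log y) ^ (-((1+ε)/p)) :=
          Real.rpow_le_rpow_of_nonpos (by linarith) hlogy (by rw [neg_nonpos]; positivity)
        have hbn : (0:ℝ) ≤ (x - y) ^ (-b) := Real.rpow_nonneg (by linarith) _
        calc M = x ^ (-b) * (x ^ (-(1/p)) * (2*L) ^ (-((1+ε)/p))) := rfl
          _ ≤ (x - y) ^ (-b) * (y ^ (-(1/p)) * (-Real.log y) ^ (-((1+ε)/p))) := by
              apply mul_le_mul e1 (mul_le_mul e2 e3 (Real.rpow_nonneg (by positivity) _)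
                (Real.rpow_nonneg hy0.le _)) _ hbn
              positivity
      -- lower bound the inner integral
      have hB : ENNReal.ofReal M * ENNReal.ofReal (x - x/2) ≤
          ∫⁻ y in Ioc (0:ℝ) x, ENNReal.ofReal ((x - y) ^ (-b) * fε y) := by
        calc ENNReal.ofReal M * ENNReal.ofReal (x - x/2)
            = ∫⁻ _ in Ioo (x/2) x, ENNReal.ofReal M := by
              rw [setLIntegral_const, Real.volume_Ioo]
          _ ≤ ∫⁻ y in Ioo (x/2) x, ENNReal.ofReal ((x - y) ^ (-b) * fε y) :=
              lintegral_mono_ae ((ae_restrict_iff' measurableSet_Ioo).2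
                (ae_of_all _ fun y hy => ENNReal.ofReal_le_ofReal (stepA y hy)))
          _ ≤ ∫⁻ y in Ioc (0:ℝ) x, ENNReal.ofReal ((x - y) ^ (-b) * fε y) :=
              lintegral_mono_set (fun y hy => ⟨lt_trans (by linarith) hy.1, hy.2.le⟩)
      -- combine with the outer ofReal(x^{-a}) factor
      have hC : ENNReal.ofReal (x ^ (-a) * (M * (x - x/2))) ≤
          ENNReal.ofReal (x ^ (-a)) *
            ∫⁻ y in Ioc (0:ℝ) x, ENNReal.ofReal ((x - y) ^ (-b) * fε y) := by
        rw [ENNReal.ofReal_mul (Real.rpow_nonneg hx0.le _), ENNReal.ofReal_mul hM]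
        exact mul_le_mul_right hB _
      -- algebraic identity for the lower bound
      have hD : x ^ (-a) * (M * (x - x/2)) = K * (x ^ (-(1/q)) * L ^ (-((1+ε)/p))) := by
        have h2L : (2*L) ^ (-((1+ε)/p)) = 2 ^ (-((1+ε)/p)) * L ^ (-((1+ε)/p)) :=
          Real.mul_rpow (by norm_num) hL.le
        have hxq : x ^ (-(1/q)) = x ^ (-a) * x ^ (-b) * x ^ (-(1/p)) * x ^ (1:ℝ) := by
          rw [← Real.rpow_add hx0, ← Real.rpow_add hx0, ← Real.rpow_add hx0]
          congr 1
          linarith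
        rw [hMdef, h2L, hxq, Real.rpow_one, hKdef]
        ring
      -- raise to the power q
      have hE : ENNReal.ofReal (K ^ q) *
          ENNReal.ofReal (x⁻¹ * (-Real.log x) ^ (-((1+ε) * q / p))) =
          ENNReal.ofReal (K * (x ^ (-(1/q)) * L ^ (-((1+ε)/p)))) ^ q := by
        rw [ENNReal.ofReal_rpow_of_nonneg (by positivity) hq0.le,
          Real.mul_rpow hK.le (by positivity),
          Real.mul_rpow (Real.rpow_nonneg hx0.le _) (Real.rpow_nonneg hL.le _),
          ← Real.rpow_mul hx0.le, ← Real.rpow_mul hL.le,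
          show -(1/q) * q = -1 by field_simp,
          show -((1+ε)/p) * q = -((1+ε) * q / p) by ring,
          Real.rpow_neg_one, ← ENNReal.ofReal_mul (by positivity), hLdef]
      rw [hE]
      exact ENNReal.rpow_le_rpow (hD ▸ hC) hq0.le
    have hdiv : ∫⁻ x in Ioo (0:ℝ) (1/2),
        ENNReal.ofReal (x⁻¹ * (-Real.log x) ^ (-((1+ε) * q / p))) = ⊤ :=
      aux_div (by linarith)
    rw [eq_top_iff]
    calc (⊤ : ℝ≥0∞) = ENNReal.ofReal (K ^ q) * ⊤ := by
          rw [ENNReal.mul_top (ENNReal.ofReal_pos.2 (by positivity)).ne']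
      _ = ENNReal.ofReal (K ^ q) * ∫⁻ x in Ioo (0:ℝ) (1/2),
            ENNReal.ofReal (x⁻¹ * (-Real.log x) ^ (-((1+ε) * q / p))) := by rw [hdiv]
      _ = ∫⁻ x in Ioo (0:ℝ) (1/2), ENNReal.ofReal (K ^ q) *
            ENNReal.ofReal (x⁻¹ * (-Real.log x) ^ (-((1+ε) * q / p))) :=
          (lintegral_const_mul' _ _ ENNReal.ofReal_ne_top).symm
      _ ≤ ∫⁻ x in Ioo (0:ℝ) (1/2),
            (ENNReal.ofReal (x ^ (-a)) *
              ∫⁻ y in Ioc (0 : ℝ) x, ENNReal.ofReal ((x - y) ^ (-b) * fε y)) ^ q :=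
          lintegral_mono_ae ((ae_restrict_iff' measurableSet_Ioo).2 (ae_of_all _ hlow))
      _ ≤ ∫⁻ x in Ioc (0 : ℝ) 1,
            (ENNReal.ofReal (x ^ (-a)) *
              ∫⁻ y in Ioc (0 : ℝ) x, ENNReal.ofReal ((x - y) ^ (-b) * fε y)) ^ q :=
          lintegral_mono_set (fun x hx => ⟨hx.1, by linarith [hx.2]⟩)
end
end
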